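/- Let f : ℝ → ℝ be continuously differentiable with f(x+1) = f(x) for all x, and suppose every zero of f is hyperbolic, i.e. f(z) = 0 implies f'(z) ≠ 0 (so the zero set Z = {x ∈ [0,1) : f(x) = 0} is finite). Then the sum over z ∈ Z of the signs sgn(f'(z)) equals 0. (The index argument in the proof of Theorem 4.3: the indices I(p_i) = sgn((X^s)'(p_i)) of the hyperbolic pseudo equilibria alternate and cancel around the circle.) -/

import Mathlib

/-!
Hyperbolic zeros are isolated, so a period contains only finitely many of them. Between two
consecutive zeros `c < d` the function keeps one sign, so `f'(c)` and `f'(d)` have opposite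
signs; hence over `[a, b)` with `a < b` zeros, the indices telescope to `(I(a) - I(b)) / 2`.
By periodicity the sum over `[0, 1)` equals the sum over `[z, z + 1)` for any zero `z`, which is
`(I(z) - I(z + 1)) / 2 = 0`.
-/

open Set Filter Topology Function

theorem Function.Periodic.finsum_mem_Ico_inter_preimage_eq {α β M : Type*} [AddCommGroup α]
    [LinearOrder α] [IsOrderedAddMonoid α] [Archimedean α] [AddCommMonoid M]
    {f : α → β} {g : α → M} {T : α} (hT : 0 < T) (hf : Periodic f T) (hg : Periodic g T)
    (t : Set β) (a b : α) :
    ∑ᶠ x ∈ Ico a (a + T) ∩ f ⁻¹' t, g x = ∑ᶠ x ∈ Ico b (b + T) ∩ f ⁻¹' t, g x := by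
  have hmaps (c d : α) :
      MapsTo (toIcoMod hT d) (Ico c (c + T) ∩ f ⁻¹' t) (Ico d (d + T) ∩ f ⁻¹' t) :=
    fun x hx ↦ ⟨toIcoMod_mem_Ico hT d x, by
      rw [mem_preimage, toIcoMod, hf.sub_zsmul_eq]; exact hx.2⟩
  have hinv (c d : α) : LeftInvOn (toIcoMod hT c) (toIcoMod hT d) (Ico c (c + T) ∩ f ⁻¹' t) :=
    fun x hx ↦ by rw [toIcoMod_toIcoMod, toIcoMod_eq_self]; exact hx.1
  exact finsum_mem_eq_of_bijOn _ (InvOn.bijOn ⟨hinv a b, hinv b a⟩ (hmaps a b) (hmaps b a))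
    fun x _ ↦ by rw [toIcoMod, hg.sub_zsmul_eq]

theorem Function.Periodic.deriv {𝕜 F : Type*} [NontriviallyNormedField 𝕜] [NormedAddCommGroup F]
    [NormedSpace 𝕜 F] {f : 𝕜 → F} {c : 𝕜} (h : Periodic f c) : Periodic (deriv f) c :=
  fun x ↦ by rw [← deriv_comp_add_const, h.funext]

section Zeros

variable {𝕜 F : Type*} [NontriviallyNormedField 𝕜] [NormedAddCommGroup F] [NormedSpace 𝕜 F]
  {f : 𝕜 → F}

theorem isDiscrete_preimage_zero_of_deriv_ne_zero (hf : ∀ z, f z = 0 → deriv f z ≠ 0) :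
    IsDiscrete (f ⁻¹' {0}) := by
  refine isDiscrete_iff_nhdsNE.2 fun z hz ↦ inf_principal_eq_bot.2 ?_
  filter_upwards [(differentiableAt_of_deriv_ne_zero (hf z hz)).hasDerivAt.eventually_ne
    (hf z hz)] with x hx
  simpa [show f z = 0 from hz] using hx

theorem IsCompact.finite_inter_preimage_zero_of_deriv_ne_zero {K : Set 𝕜} (hK : IsCompact K)
    (hcont : Continuous f) (hf : ∀ z, f z = 0 → deriv f z ≠ 0) : (K ∩ f ⁻¹' {0}).Finite :=
  (hK.inter_right (isClosed_singleton.preimage hcont)).finite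
    ((isDiscrete_preimage_zero_of_deriv_ne_zero hf).mono inter_subset_right)

end Zeros

section RealDeriv

variable {f : ℝ → ℝ} {f' x : ℝ}

theorem HasDerivAt.eventually_gt_right (h : HasDerivAt f f' x) (hf' : 0 < f') :
    ∀ᶠ y in 𝓝[>] x, f x < f y := by
  have hslope := (hasDerivAt_iff_tendsto_slope.1 h).mono_left
    (nhdsWithin_mono x fun y (hy : x < y) ↦ hy.ne')
  filter_upwards [hslope.eventually_const_lt hf', self_mem_nhdsWithin] with y hy hxy
  exact (slope_pos_iff_of_le (le_of_lt hxy)).1 hy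

theorem HasDerivAt.eventually_lt_left (h : HasDerivAt f f' x) (hf' : 0 < f') :
    ∀ᶠ y in 𝓝[<] x, f y < f x := by
  have hslope := (hasDerivAt_iff_tendsto_slope.1 h).mono_left
    (nhdsWithin_mono x fun y (hy : y < x) ↦ hy.ne)
  filter_upwards [hslope.eventually_const_lt hf', self_mem_nhdsWithin] with y hy hyx
  exact (slope_pos_iff_of_le (le_of_lt hyx)).1 (slope_comm f x y ▸ hy)

theorem exists_mem_Ioo_eq_of_deriv_pos {a b fa fb : ℝ} (hab : a < b)
    (hf : ContinuousOn f (Icc a b)) (hfab : f a = f b) (ha : HasDerivAt f fa a)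
    (hb : HasDerivAt f fb b) (hfa : 0 < fa) (hfb : 0 < fb) : ∃ c ∈ Ioo a b, f c = f a := by
  obtain ⟨a', hfa', ha'⟩ := ((ha.eventually_gt_right hfa).and
    (Ioo_mem_nhdsGT (left_lt_add_div_two.2 hab))).exists
  obtain ⟨b', hfb', hb'⟩ := ((hb.eventually_lt_left hfb).and
    (Ioo_mem_nhdsLT (add_div_two_lt_right.2 hab))).exists
  have hab' : a' ≤ b' := (ha'.2.trans hb'.1).le
  obtain ⟨c, hc, hfc⟩ := intermediate_value_Ioo' hab'
    (hf.mono (Icc_subset_Icc ha'.1.le hb'.2.le)) ⟨hfab ▸ hfb', hfa'⟩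
  exact ⟨c, ⟨ha'.1.trans hc.1, hc.2.trans hb'.2⟩, hfc⟩

theorem sign_deriv_eq_neg_of_adjacent_zeros (hf : Continuous f) {a b : ℝ} (hab : a < b)
    (ha : f a = 0) (hb : f b = 0) (hne : ∀ x ∈ Ioo a b, f x ≠ 0) (hda : deriv f a ≠ 0)
    (hdb : deriv f b ≠ 0) : Real.sign (deriv f b) = -Real.sign (deriv f a) := by
  have hfa := (differentiableAt_of_deriv_ne_zero hda).hasDerivAt
  have hfb := (differentiableAt_of_deriv_ne_zero hdb).hasDerivAt
  rcases hda.lt_or_gt with hna | hpa <;> rcases hdb.lt_or_gt with hnb | hpb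
  · obtain ⟨c, hc, hfc⟩ := exists_mem_Ioo_eq_of_deriv_pos hab hf.neg.continuousOn
      (by simp [ha, hb]) hfa.neg hfb.neg (neg_pos.2 hna) (neg_pos.2 hnb)
    exact absurd (by simpa [ha] using hfc) (hne c hc)
  · rw [Real.sign_of_neg hna, Real.sign_of_pos hpb, neg_neg]
  · rw [Real.sign_of_pos hpa, Real.sign_of_neg hnb]
  · obtain ⟨c, hc, hfc⟩ := exists_mem_Ioo_eq_of_deriv_pos hab hf.continuousOn
      (ha.trans hb.symm) hfa hfb hpa hpb
    exact absurd (hfc.trans ha) (hne c hc)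

end RealDeriv

theorem finsum_mem_Ico_inter_eq_half_sub {α : Type*} [LinearOrder α] {Z : Set α} {s : α → ℝ}
    (halt : ∀ c ∈ Z, ∀ d ∈ Z, c < d → Disjoint (Ioo c d) Z → s d = -s c) {a b : α}
    (hab : a < b) (ha : a ∈ Z) (hb : b ∈ Z) (hfin : (Icc a b ∩ Z).Finite) :
    ∑ᶠ z ∈ Ico a b ∩ Z, s z = (s a - s b) / 2 := by
  induction hn : (Ioo a b ∩ Z).ncard using Nat.strong_induction_on generalizing a b with
  | _ n ih =>
  rcases (Ioo a b ∩ Z).eq_empty_or_nonempty with hempty | ⟨c, ⟨hac, hcb⟩, hc⟩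
  · rw [← Ioo_insert_left hab, insert_inter_of_mem ha, hempty, insert_empty_eq,
      finsum_mem_singleton, halt a ha b hb hab (disjoint_iff_inter_eq_empty.2 hempty)]
    ring
  · have hfin' {l r : α} (hl : a ≤ l) (hr : r ≤ b) : (Icc l r ∩ Z).Finite :=
      hfin.subset (inter_subset_inter_left _ (Icc_subset_Icc hl hr))
    have hlt {l r : α} (hl : a ≤ l) (hr : r ≤ b) (hcl : c ∉ Ioo l r) :
        (Ioo l r ∩ Z).ncard < n :=
      hn ▸ ncard_lt_ncard ((ssubset_iff_of_subset
        (inter_subset_inter_left _ (Ioo_subset_Ioo hl hr))).2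
          ⟨c, ⟨⟨hac, hcb⟩, hc⟩, fun h ↦ hcl h.1⟩)
        (hfin.subset (inter_subset_inter_left _ Ioo_subset_Icc_self))
    rw [← Ico_union_Ico_eq_Ico hac.le hcb.le, union_inter_distrib_right,
      finsum_mem_union (Ico_disjoint_Ico_same.mono inter_subset_left inter_subset_left)
        ((hfin' le_rfl hcb.le).subset (inter_subset_inter_left _ Ico_subset_Icc_self))
        ((hfin' hac.le le_rfl).subset (inter_subset_inter_left _ Ico_subset_Icc_self)),
      ih _ (hlt le_rfl hcb.le (lt_irrefl c ·.2)) hac ha hc (hfin' le_rfl hcb.le) rfl,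
      ih _ (hlt hac.le le_rfl (lt_irrefl c ·.1)) hcb hc hb (hfin' hac.le le_rfl) rfl]
    ring

/-- Index argument in the proof of Theorem 4.3: the indices
`I(z) = sgn(f'(z))` of the hyperbolic pseudo equilibria of the `1`-periodic
sliding vector field `f` cancel around the circle. -/
theorem pseudo_equilibria_index_sum_zero (f : ℝ → ℝ)
    (hf : ContDiff ℝ 1 f)
    (hper : ∀ x : ℝ, f (x + 1) = f x)
    (hhyp : ∀ z : ℝ, f z = 0 → deriv f z ≠ 0) :
    ∑ᶠ z ∈ {x ∈ Set.Ico (0 : ℝ) 1 | f x = 0}, Real.sign (deriv f z) = 0 := by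
  have hcont : Continuous f := hf.continuous
  have hindex : Periodic (fun z ↦ Real.sign (deriv f z)) 1 := fun z ↦ by
    simp only [Periodic.deriv hper z]
  rcases em (∃ z, f z = 0) with ⟨z, hz⟩ | hnone
  · have hperiod : {x ∈ Ico (0 : ℝ) 1 | f x = 0} = Ico 0 (0 + 1) ∩ f ⁻¹' {0} := by
      rw [zero_add]; rfl
    rw [hperiod, Periodic.finsum_mem_Ico_inter_preimage_eq one_pos hper hindex _ 0 z,
      finsum_mem_Ico_inter_eq_half_sub (Z := f ⁻¹' {0})
        (fun c hc d hd hcd hdisj ↦ sign_deriv_eq_neg_of_adjacent_zeros hcont hcd hc hd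
          (fun x hx ↦ disjoint_left.1 hdisj hx) (hhyp c hc) (hhyp d hd))
        (lt_add_one z) hz (by rwa [mem_preimage, hper])
        (isCompact_Icc.finite_inter_preimage_zero_of_deriv_ne_zero hcont hhyp),
      Periodic.deriv hper z, sub_self, zero_div]
  · simp [not_exists.1 hnone]
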